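/- For any k-by-k reciprocal matrix B, there exists a positive diagonal matrix D such that the all-ones vector e_k is efficient for DBD⁻¹ and DBD⁻¹ is well-behaved. (Concretely, one may take D⁻¹ = diag of any fixed column of B, so that DBD⁻¹ has a row and a column consisting entirely of ones.) -/

import Mathlib

open Matrix BigOperators Finset

/-- A positive square matrix is reciprocal if `A j i = 1 / A i j` for all `i, j`. -/
def IsReciprocal {n : ℕ} (A : Matrix (Fin n) (Fin n) ℝ) : Prop :=
  (∀ i j, 0 < A i j) ∧ ∀ i j, A j i = 1 / A i j

/-- A reciprocal matrix is consistent if `A i j * A j k = A i k` for all `i, j, k`. -/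
def IsConsistent {n : ℕ} (A : Matrix (Fin n) (Fin n) ℝ) : Prop :=
  IsReciprocal A ∧ ∀ i j k, A i j * A j k = A i k

/-- A vector is positive if all its entries are positive. -/
def PosVec {n : ℕ} (w : Fin n → ℝ) : Prop := ∀ i, 0 < w i

/-- A positive vector `w` is efficient for `A` if any positive vector `v` whose associated
consistent matrix approximates `A` at least as well as that of `w` (entrywise) is a positive
multiple of `w`. -/
def IsEfficient {n : ℕ} (A : Matrix (Fin n) (Fin n) ℝ) (w : Fin n → ℝ) : Prop :=
  PosVec w ∧ ∀ v : Fin n → ℝ, PosVec v →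
    (∀ i j, |A i j - v i / v j| ≤ |A i j - w i / w j|) →
    ∃ c : ℝ, 0 < c ∧ v = c • w

/-- The `i`-th row sum of a matrix. -/
noncomputable def rowSum {n : ℕ} (A : Matrix (Fin n) (Fin n) ℝ) (i : Fin n) : ℝ := ∑ j, A i j

/-- Given the row sums `r` in nonincreasing order (`r 0` the largest), the auxiliary function
`f(x) = 1/x + ∑_{i=2}^{k} 1/(r₁ - rᵢ + x) + 1 - r₁ - x` (note the `i = 1` term of the sum is
`1/x` since `r 0 - r 0 = 0`). -/
noncomputable def auxF {k : ℕ} (r : Fin (k + 1) → ℝ) (x : ℝ) : ℝ :=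
  (∑ i, 1 / (r 0 - r i + x)) + 1 - r 0 - x

/-- A reciprocal matrix `B` is well-behaved if, with row sums `r₁ ≥ ⋯ ≥ r_k`, either
`r₁ - r_k ≥ 1` (type I), or `r₁ - r_k < 1` and `f(1 + r_k - r₁) ≥ 0` (type II). -/
def WellBehaved {k : ℕ} (B : Matrix (Fin (k + 1)) (Fin (k + 1)) ℝ) : Prop :=
  ∃ σ : Equiv.Perm (Fin (k + 1)), Antitone (rowSum B ∘ σ) ∧
    (1 ≤ rowSum B (σ 0) - rowSum B (σ (Fin.last k)) ∨
      (rowSum B (σ 0) - rowSum B (σ (Fin.last k)) < 1 ∧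
        0 ≤ auxF (rowSum B ∘ σ) (1 + rowSum B (σ (Fin.last k)) - rowSum B (σ 0))))

/-!
Scaling `B` by `d i = 1 / B i 0` turns its first column, and by reciprocity also its first row,
into ones. A column of ones pins every competing vector `v` to `v i = v 0`, so the all-ones vector
is efficient. A row of ones has sum `k + 1`, hence the smallest row sum `r_k` is at most
`k + 1`; when `r₁ - r_k < 1`, each of the `k + 1` terms of `f(1 + r_k - r₁)` equals
`1 / (1 + r_k - rᵢ) ≥ 1`, so `f(1 + r_k - r₁) ≥ k + 1 - r_k ≥ 0`.
-/

theorem exists_perm_antitone {n : ℕ} {α : Type*} [LinearOrder α] (f : Fin n → α) :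
    ∃ σ : Equiv.Perm (Fin n), Antitone (f ∘ σ) :=
  ⟨Tuple.sort (OrderDual.toDual ∘ f), Tuple.monotone_sort (OrderDual.toDual ∘ f)⟩

namespace IsReciprocal

variable {n : ℕ} {B : Matrix (Fin n) (Fin n) ℝ}

theorem mul_apply_symm (hB : IsReciprocal B) (i j : Fin n) : B i j * B j i = 1 := by
  rw [hB.2 i j, mul_one_div_cancel (hB.1 i j).ne']

theorem apply_self (hB : IsReciprocal B) (i : Fin n) : B i i = 1 := by
  nlinarith [hB.mul_apply_symm i i, hB.1 i i]

theorem scaleByCol_apply_col (hB : IsReciprocal B) (c i : Fin n) :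
    1 / B i c * B i c / (1 / B c c) = 1 := by
  rw [hB.apply_self, one_div_one, div_one, one_div_mul_cancel (hB.1 i c).ne']

theorem scaleByCol_apply_row (hB : IsReciprocal B) (c j : Fin n) :
    1 / B c c * B c j / (1 / B j c) = 1 := by
  rw [hB.apply_self, one_div_one, one_mul, div_div_eq_mul_div, div_one, hB.mul_apply_symm]

end IsReciprocal

theorem isEfficient_one_of_col_eq_one {n : ℕ} {A : Matrix (Fin n) (Fin n) ℝ} (c : Fin n)
    (hA : ∀ i, A i c = 1) : IsEfficient A (fun _ => 1) := by
  refine ⟨fun _ => one_pos, fun v hv hle => ⟨v c, hv c, funext fun i => ?_⟩⟩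
  have h : |1 - v i / v c| ≤ 0 := by simpa [hA i] using hle i c
  have hvi : v i / v c = 1 := by linarith [abs_nonpos_iff.mp h]
  simpa using (div_eq_one_iff_eq (hv c).ne').mp hvi

theorem card_sub_last_le_auxF {k : ℕ} {r : Fin (k + 1) → ℝ} (hr : Antitone r)
    (hspread : r 0 - r (Fin.last k) < 1) :
    (k + 1 : ℝ) - r (Fin.last k) ≤ auxF r (1 + r (Fin.last k) - r 0) := by
  have hterm : ∀ i, (1 : ℝ) ≤ 1 / (r 0 - r i + (1 + r (Fin.last k) - r 0)) := by
    intro i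
    have hmax : r i ≤ r 0 := hr (Fin.zero_le i)
    have hmin : r (Fin.last k) ≤ r i := hr (Fin.le_last i)
    rw [le_div_iff₀ (by linarith)]
    linarith
  have hsum : (k + 1 : ℝ) ≤ ∑ i, 1 / (r 0 - r i + (1 + r (Fin.last k) - r 0)) := by
    simpa using Finset.card_nsmul_le_sum univ _ 1 fun i _ => hterm i
  unfold auxF
  linarith

theorem wellBehaved_of_rowSum_le {k : ℕ} {A : Matrix (Fin (k + 1)) (Fin (k + 1)) ℝ}
    (c : Fin (k + 1)) (hc : rowSum A c ≤ k + 1) : WellBehaved A := by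
  obtain ⟨σ, hσ⟩ := exists_perm_antitone (rowSum A)
  refine ⟨σ, hσ, or_iff_not_imp_left.mpr fun hspread => ⟨not_le.mp hspread, ?_⟩⟩
  have hmin : rowSum A (σ (Fin.last k)) ≤ rowSum A c := by
    simpa using hσ (Fin.le_last (σ.symm c))
  have := card_sub_last_le_auxF hσ (not_le.mp hspread)
  simp only [Function.comp_apply] at this
  linarith

/-- For any reciprocal matrix `B` there is a positive diagonal matrix `D = diag d` such that
the all-ones vector is efficient for `D B D⁻¹` and `D B D⁻¹` is well-behaved. -/
theorem stmt19 {k : ℕ} (B : Matrix (Fin (k + 1)) (Fin (k + 1)) ℝ) (hB : IsReciprocal B) :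
    ∃ d : Fin (k + 1) → ℝ, (∀ i, 0 < d i) ∧
      IsEfficient (Matrix.of fun i j => d i * B i j / d j) (fun _ => 1) ∧
      WellBehaved (Matrix.of fun i j => d i * B i j / d j) := by
  refine ⟨fun i => 1 / B i 0, fun i => one_div_pos.mpr (hB.1 i 0),
    isEfficient_one_of_col_eq_one 0 fun i => hB.scaleByCol_apply_col 0 i,
    wellBehaved_of_rowSum_le 0 ?_⟩
  simp only [rowSum, Matrix.of_apply, hB.scaleByCol_apply_row 0]
  simp
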